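/- arXiv:1408.5963 — 6 statements merged into one kernel-verified Lean document; each statement's English description precedes it below -/
import Mathlib

section
/- If two pointed (Π,ℛ)-models (M,w) and (N,v) satisfy the same (Π,ℛ,n)-type, then for every message passing (Π,ℛ)-automaton B and every round m ≤ n, the state of B at w in M in round m equals the state of B at v in N in round m. -/
/-- Formulae of modal logic ML(Π,ℛ): `P` indexes unary predicate symbols,
`R` indexes binary relation symbols (modalities). -/
inductive MF (P R : Type) : Type
  | top : MF P R
  | atom : P → MF P R
  | neg : MF P R → MF P R
  | and : MF P R → MF P R → MF P R
  | dia : R → MF P R → MF P R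

/-- A (Π,ℛ)-Kripke model with domain `W`. -/
structure KModel (P R W : Type) where
  val : P → W → Prop
  rel : R → W → W → Prop

/-- Satisfaction for modal logic. -/
def msat {P R W : Type} (M : KModel P R W) : W → MF P R → Prop
  | _, .top => True
  | w, .atom p => M.val p w
  | w, .neg φ => ¬ msat M w φ
  | w, .and φ ψ => msat M w φ ∧ msat M w ψ
  | w, .dia r φ => ∃ v, M.rel r w v ∧ msat M v φ

/-- Abstract representation of (Π,ℛ,n)-types: a depth-0 type records the set of
unary predicates holding at a point; a depth-(n+1) type records a depth-n type
together with, for each modality, the set of depth-n types realized at successors. -/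
def TypeN (P R : Type) : ℕ → Type
  | 0 => Set P
  | n+1 => TypeN P R n × (R → Set (TypeN P R n))

/-- A pointed model `(M,w)` satisfies the (Π,ℛ,n)-type `τ`. -/
def satT {P R W : Type} (M : KModel P R W) : (n : ℕ) → W → TypeN P R n → Prop
  | 0, w, τ => ∀ p, M.val p w ↔ τ p
  | n+1, w, τ => satT M n w τ.1 ∧
      ∀ r σ, ((∃ v, M.rel r w v ∧ satT M n v σ) ↔ τ.2 r σ)

/-- The (Π,ℛ,n)-type of a pointed model `(M,w)`. -/
def typeOf {P R W : Type} (M : KModel P R W) : (n : ℕ) → W → TypeN P R n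
  | 0, w => fun p => M.val p w
  | n+1, w => ⟨typeOf M n w, fun r σ => ∃ v, M.rel r w v ∧ typeOf M n v = σ⟩

/-- A synchronized message passing (Π,ℛ)-automaton with states `Q` and messages `Msg`. -/
structure MPA (P R Q Msg : Type) where
  init : Set P → Q
  trans : (R → Set Msg) → Q → Q
  msgf : Q → R → Msg
  accept : Set Q
  reject : Set Q

/-- The state of automaton `A` at node `w` of model `M` in round `n`. -/
def MPA.run {P R W Q Msg : Type} (A : MPA P R Q Msg) (M : KModel P R W) : ℕ → W → Q
  | 0, w => A.init {p | M.val p w}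
  | n+1, w =>
      A.trans (fun r => {m | ∃ v, M.rel r w v ∧ m = A.msgf (A.run M n v) r}) (A.run M n w)

/-- `A` accepts `(M,w)` in round `n`. -/
def MPA.acceptsAt {P R W Q Msg : Type} (A : MPA P R Q Msg) (M : KModel P R W)
    (w : W) (n : ℕ) : Prop :=
  A.run M n w ∈ A.accept ∧ ∀ m < n, A.run M m w ∉ A.reject

/-- `A` rejects `(M,w)` in round `n`. -/
def MPA.rejectsAt {P R W Q Msg : Type} (A : MPA P R Q Msg) (M : KModel P R W)
    (w : W) (n : ℕ) : Prop :=
  A.run M n w ∈ A.reject ∧ ∀ m < n, A.run M m w ∉ A.accept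

/-- `A` accepts the pointed model `(M,w)`. -/
def MPA.accepts {P R W Q Msg : Type} (A : MPA P R Q Msg) (M : KModel P R W) (w : W) : Prop :=
  ∃ n, A.acceptsAt M w n

/-- `A` rejects the pointed model `(M,w)`. -/
def MPA.rejects {P R W Q Msg : Type} (A : MPA P R Q Msg) (M : KModel P R W) (w : W) : Prop :=
  ∃ n, A.rejectsAt M w n

/-- Formulae of first-order logic FO(Π,ℛ) with variables indexed by ℕ. -/
inductive FO (P R : Type) : Type
  | top : FO P R
  | eq : ℕ → ℕ → FO P R
  | atom : P → ℕ → FO P R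
  | rel : R → ℕ → ℕ → FO P R
  | neg : FO P R → FO P R
  | and : FO P R → FO P R → FO P R
  | ex : ℕ → FO P R → FO P R

/-- First-order satisfaction under an assignment `f`. -/
def fsat {P R W : Type} (M : KModel P R W) : (ℕ → W) → FO P R → Prop
  | _, .top => True
  | f, .eq x y => f x = f y
  | f, .atom p x => M.val p (f x)
  | f, .rel r x y => M.rel r (f x) (f y)
  | f, .neg φ => ¬ fsat M f φ
  | f, .and φ ψ => fsat M f φ ∧ fsat M f ψ
  | f, .ex x φ => ∃ v, fsat M (Function.update f x v) φ


theorem satT_iff_typeOf {P R W : Type} (M : KModel P R W) :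
    ∀ (n : ℕ) (w : W) (τ : TypeN P R n), satT M n w τ ↔ typeOf M n w = τ
  | 0, w, τ => by
    simp only [satT, typeOf]
    constructor
    · intro h; funext p; exact propext (h p)
    · intro h p; rw [← h]
  | n+1, w, τ => by
    simp only [satT, typeOf]
    constructor
    · rintro ⟨h1, h2⟩
      have e1 := (satT_iff_typeOf M n w τ.1).mp h1
      have e2 : (fun r σ => ∃ v, M.rel r w v ∧ typeOf M n v = σ) = τ.2 := by
        funext r σ
        apply propext
        rw [← h2 r σ]
        constructor
        · rintro ⟨v, hv, ht⟩; exact ⟨v, hv, (satT_iff_typeOf M n v σ).mpr ht⟩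
        · rintro ⟨v, hv, ht⟩; exact ⟨v, hv, (satT_iff_typeOf M n v σ).mp ht⟩
      exact Prod.ext e1 e2
    · intro h
      refine ⟨(satT_iff_typeOf M n w τ.1).mpr (congrArg Prod.fst h), ?_⟩
      intro r σ
      rw [← congrArg Prod.snd h]
      constructor
      · rintro ⟨v, hv, ht⟩; exact ⟨v, hv, (satT_iff_typeOf M n v σ).mp ht⟩
      · rintro ⟨v, hv, ht⟩; exact ⟨v, hv, (satT_iff_typeOf M n v σ).mpr ht⟩

theorem run_eq_of_typeOf {P R W W' Q Msg : Type} (B : MPA P R Q Msg)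
    (M : KModel P R W) (N : KModel P R W') :
    ∀ (n : ℕ) (w : W) (v : W'), typeOf M n w = typeOf N n v →
      ∀ m ≤ n, B.run M m w = B.run N m v
  | 0, w, v, h, m, hm => by
    interval_cases m
    simp only [MPA.run]
    exact congrArg B.init h
  | n+1, w, v, h, m, hm => by
    have h1 : typeOf M n w = typeOf N n v := congrArg Prod.fst h
    have h2 := congrArg Prod.snd h
    rcases Nat.lt_or_ge m (n+1) with hlt | hge
    · exact run_eq_of_typeOf B M N n w v h1 m (Nat.lt_succ_iff.mp hlt)
    · have hm' : m = n + 1 := le_antisymm hm hge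
      subst hm'
      simp only [MPA.run]
      congr 1
      · funext r
        ext x
        simp only [Set.mem_setOf_eq]
        constructor
        · rintro ⟨u, hu, hx⟩
          have := (iff_of_eq (congrFun (congrFun h2 r) (typeOf M n u))).mp
            ⟨u, hu, rfl⟩
          obtain ⟨u', hu', ht⟩ := this
          exact ⟨u', hu', hx ▸ congrArg (fun q => B.msgf q r)
            (run_eq_of_typeOf B M N n u u' ht.symm n le_rfl)⟩
        · rintro ⟨u, hu, hx⟩
          have := (iff_of_eq (congrFun (congrFun h2 r) (typeOf N n u))).mpr
            ⟨u, hu, rfl⟩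
          obtain ⟨u', hu', ht⟩ := this
          exact ⟨u', hu', hx ▸ (congrArg (fun q => B.msgf q r)
            (run_eq_of_typeOf B M N n u' u ht n le_rfl)).symm⟩
      · exact run_eq_of_typeOf B M N n w v h1 n le_rfl

/-- pointed models satisfying the same (Π,ℛ,n)-type receive the same
state from every message passing (Π,ℛ)-automaton in every round m ≤ n. -/
theorem stmt_4 (P R : Type) (n : ℕ) (W W' : Type) (M : KModel P R W) (N : KModel P R W')
    (w : W) (v : W') (τ : TypeN P R n) (hM : satT M n w τ) (hN : satT N n v τ)
    (Q Msg : Type) (B : MPA P R Q Msg) (m : ℕ) (hm : m ≤ n) :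
    B.run M m w = B.run N m v := by
  have hw := (satT_iff_typeOf M n w τ).mp hM
  have hv := (satT_iff_typeOf N n v τ).mp hN
  exact run_eq_of_typeOf B M N n w v (hw.trans hv.symm) m hm
end

section
/- For every (Π,ℛ)-automaton A, the class of pointed models accepted by A is definable by a (possibly infinite) disjunction of modal formulae, and the class of pointed models rejected by A is definable by a (possibly infinite) disjunction of modal formulae. -/
/-!
The state of an automaton at `w` in round `n` is a function of the depth-`n` modal type of
`(M, w)`, and so are its states in all earlier rounds. Hence acceptance in round `n` is a
union of depth-`n` types. With finitely many predicates and modalities there are finitely many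
types of each depth, so each type is pinned down by a single characteristic modal formula, and
the accepted class is the disjunction of the characteristic formulae of the accepting types.
-/

namespace MF

variable {P R : Type}

def conjList : List (MF P R) → MF P R
  | [] => .top
  | φ :: l => .and φ (conjList l)

noncomputable def conjAll {α : Type} [Finite α] (f : α → MF P R) : MF P R :=
  letI := Fintype.ofFinite α
  conjList (Finset.univ.toList.map f)

def lit (b : Prop) [Decidable b] (φ : MF P R) : MF P R :=
  if b then φ else .neg φ

end MF

section Satisfaction

variable {P R W : Type} (M : KModel P R W)

theorem msat_conjList (w : W) :
    ∀ l : List (MF P R), msat M w (MF.conjList l) ↔ ∀ φ ∈ l, msat M w φ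
  | [] => by simp [MF.conjList, msat]
  | φ :: l => by simp [MF.conjList, msat, msat_conjList w l]

theorem msat_conjAll {α : Type} [Finite α] (w : W) (f : α → MF P R) :
    msat M w (MF.conjAll f) ↔ ∀ a, msat M w (f a) := by
  let := Fintype.ofFinite α
  simp [MF.conjAll, msat_conjList]

theorem msat_lit (w : W) (b : Prop) [Decidable b] (φ : MF P R) :
    msat M w (MF.lit b φ) ↔ (msat M w φ ↔ b) := by
  by_cases hb : b <;> simp [MF.lit, hb, msat]

end Satisfaction

section Types

variable {P R : Type}

instance TypeN.finite [Finite P] [Finite R] : ∀ n, Finite (TypeN P R n)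
  | 0 => inferInstanceAs (Finite (Set P))
  | n + 1 =>
      haveI := TypeN.finite n
      inferInstanceAs (Finite (TypeN P R n × (R → Set (TypeN P R n))))

variable {W W' : Type} (M : KModel P R W)

theorem typeOf_zero_eq_iff (w : W) (τ : TypeN P R 0) :
    typeOf M 0 w = τ ↔ ∀ p, M.val p w ↔ τ p :=
  ⟨fun h _ => h ▸ Iff.rfl, fun h => Set.ext h⟩

theorem typeOf_succ_eq_iff (n : ℕ) (w : W) (τ : TypeN P R (n + 1)) :
    typeOf M (n + 1) w = τ ↔ typeOf M n w = τ.1 ∧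
      ∀ r σ, ((∃ v, M.rel r w v ∧ typeOf M n v = σ) ↔ τ.2 r σ) := by
  refine ⟨fun h => h ▸ ⟨rfl, fun _ _ => Iff.rfl⟩, fun ⟨h₁, h₂⟩ => Prod.ext h₁ ?_⟩
  funext r σ
  exact propext (h₂ r σ)

theorem typeOf_eq_of_le {M' : KModel P R W'} {w : W} {w' : W'} {m n : ℕ} (hmn : m ≤ n)
    (h : typeOf M n w = typeOf M' n w') : typeOf M m w = typeOf M' m w' := by
  induction hmn with
  | refl => exact h
  | step _ ih => exact ih (congrArg Prod.fst h)

open Classical in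
noncomputable def charFormula [Finite P] [Finite R] : (n : ℕ) → TypeN P R n → MF P R
  | 0, τ => MF.conjAll fun p => MF.lit (τ p) (.atom p)
  | n + 1, τ => .and (charFormula n τ.1)
      (MF.conjAll fun x : R × TypeN P R n => MF.lit (τ.2 x.1 x.2) (.dia x.1 (charFormula n x.2)))

theorem msat_charFormula_iff [Finite P] [Finite R] :
    ∀ (n : ℕ) (τ : TypeN P R n) (w : W), msat M w (charFormula n τ) ↔ typeOf M n w = τ
  | 0, τ, w => by
      simp only [charFormula, msat_conjAll, msat_lit, msat, typeOf_zero_eq_iff]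
  | n + 1, τ, w => by
      simp only [charFormula, msat, msat_conjAll, msat_lit, Prod.forall, typeOf_succ_eq_iff,
        msat_charFormula_iff n]

theorem exists_modal_disjunction_of_typeOf_invariant [Finite P] [Finite R]
    (C : ℕ → ∀ W : Type, KModel P R W → W → Prop)
    (hC : ∀ n (W W' : Type) (M : KModel P R W) (M' : KModel P R W') w w',
      typeOf M n w = typeOf M' n w' → C n W M w → C n W' M' w') :
    ∃ Φ : Set (MF P R), ∀ (W : Type) (M : KModel P R W) (w : W),
      (∃ n, C n W M w) ↔ ∃ φ ∈ Φ, msat M w φ := by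
  refine ⟨{φ | ∃ (n : ℕ) (W : Type) (M : KModel P R W) (w : W),
    C n W M w ∧ φ = charFormula n (typeOf M n w)}, fun W M w => ⟨?_, ?_⟩⟩
  · rintro ⟨n, hn⟩
    exact ⟨_, ⟨n, W, M, w, hn, rfl⟩, (msat_charFormula_iff M n _ w).2 rfl⟩
  · rintro ⟨_, ⟨n, W', M', w', hn, rfl⟩, hsat⟩
    exact ⟨n, hC n W' W M' M w' w ((msat_charFormula_iff M n _ w).1 hsat).symm hn⟩

end Types

namespace MPA

variable {P R Q Msg : Type} (A : MPA P R Q Msg)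

def stateOfType : (n : ℕ) → TypeN P R n → Q
  | 0, τ => A.init {p | τ p}
  | n + 1, τ => A.trans (fun r => {m | ∃ σ, τ.2 r σ ∧ m = A.msgf (stateOfType n σ) r})
      (stateOfType n τ.1)

variable {W W' : Type} (M : KModel P R W) (M' : KModel P R W')

theorem stateOfType_typeOf : ∀ (n : ℕ) (w : W), A.stateOfType n (typeOf M n w) = A.run M n w
  | 0, _ => rfl
  | n + 1, w => by
      simp only [stateOfType, run, typeOf, stateOfType_typeOf n]
      congr 1
      funext r
      ext m
      constructor
      · rintro ⟨_, ⟨v, hv, rfl⟩, rfl⟩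
        exact ⟨v, hv, by rw [stateOfType_typeOf n v]⟩
      · rintro ⟨v, hv, rfl⟩
        exact ⟨_, ⟨v, hv, rfl⟩, by rw [stateOfType_typeOf n v]⟩

theorem run_eq_of_typeOf_eq {w : W} {w' : W'} {m n : ℕ} (hmn : m ≤ n)
    (h : typeOf M n w = typeOf M' n w') : A.run M m w = A.run M' m w' := by
  rw [← stateOfType_typeOf, ← stateOfType_typeOf, typeOf_eq_of_le M hmn h]

theorem acceptsAt_of_typeOf_eq {w : W} {w' : W'} {n : ℕ} (h : typeOf M n w = typeOf M' n w')
    (hA : A.acceptsAt M w n) : A.acceptsAt M' w' n := by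
  refine ⟨A.run_eq_of_typeOf_eq M M' le_rfl h ▸ hA.1, fun m hm => ?_⟩
  rw [← A.run_eq_of_typeOf_eq M M' hm.le h]
  exact hA.2 m hm

theorem rejectsAt_of_typeOf_eq {w : W} {w' : W'} {n : ℕ} (h : typeOf M n w = typeOf M' n w')
    (hA : A.rejectsAt M w n) : A.rejectsAt M' w' n := by
  refine ⟨A.run_eq_of_typeOf_eq M M' le_rfl h ▸ hA.1, fun m hm => ?_⟩
  rw [← A.run_eq_of_typeOf_eq M M' hm.le h]
  exact hA.2 m hm

end MPA

/-- the class of pointed models accepted by an automaton A is definable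
by a (possibly infinite) disjunction of modal formulae, and likewise for the class
of pointed models rejected by A. -/
theorem stmt_6 (P R : Type) [Finite P] [Finite R] (Q Msg : Type) (A : MPA P R Q Msg) :
    (∃ Φ : Set (MF P R), ∀ (W : Type) (M : KModel P R W) (w : W),
        A.accepts M w ↔ ∃ φ ∈ Φ, msat M w φ) ∧
    (∃ Ψ : Set (MF P R), ∀ (W : Type) (M : KModel P R W) (w : W),
        A.rejects M w ↔ ∃ ψ ∈ Ψ, msat M w ψ) :=
  ⟨exists_modal_disjunction_of_typeOf_invariant (fun n _ M w => A.acceptsAt M w n)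
      fun _ _ _ M M' _ _ h => A.acceptsAt_of_typeOf_eq M M' h,
    exists_modal_disjunction_of_typeOf_invariant (fun n _ M w => A.rejectsAt M w n)
      fun _ _ _ M M' _ _ h => A.rejectsAt_of_typeOf_eq M M' h⟩
end

section
/- The type automaton computes types: for every n ∈ ℕ and every pointed (Π,ℛ)-model (M,w), the state of the type automaton at w in round n equals the (Π,ℛ,n)-type of (M,w). -/
/-- The (Π,ℛ)-type automaton: states and messages are types of all depths, the
initial transition records the local predicate information as a depth-0 type, each
node broadcasts its current type, and the transition builds the next-depth type
from the received sets of types. -/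
def typeAut (P R : Type) : MPA P R (Σ n : ℕ, TypeN P R n) (Σ n : ℕ, TypeN P R n) where
  init s := ⟨0, fun p => p ∈ s⟩
  trans N q := ⟨q.1 + 1, ⟨q.2, fun r σ => (⟨q.1, σ⟩ : Σ n : ℕ, TypeN P R n) ∈ N r⟩⟩
  msgf q _ := q
  accept := ∅
  reject := ∅

/-- the type automaton computes types: its state at w in round n is
the (Π,ℛ,n)-type of (M,w). -/
theorem stmt_7 (P R : Type) (W : Type) (M : KModel P R W) (n : ℕ) (w : W) :
    (typeAut P R).run M n w = ⟨n, typeOf M n w⟩ := by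
  induction n generalizing w with
  | zero => rfl
  | succ n ih =>
    simp only [MPA.run, ih]
    simp only [typeAut, typeOf]
    congr 2
    funext r σ
    simp only [Set.mem_setOf_eq]
    refine propext ⟨fun ⟨v, h, e⟩ => ⟨v, h, by cases e; rfl⟩, fun ⟨v, h, e⟩ => ⟨v, h, by rw [e]⟩⟩
end

section
/- Suppose ⋁Φ defines 𝒦 with respect to 𝓗, ⋁Ψ defines 𝓗∖𝒦 with respect to 𝓗, and 𝓗 is defined by a first-order theory T. Then there exist finite subsets Φ′ ⊆ Φ and Ψ′ ⊆ Ψ such that ⋁Φ′ defines 𝒦 with respect to 𝓗 and ⋁Ψ′ defines 𝓗∖𝒦 with respect to 𝓗. -/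
/-! Every pointed model of `T` satisfies a formula of `Φ ∪ Ψ`. If no finite part `F` of `Φ ∪ Ψ`
had this property, pick for each `F` a model of `T` at which all of `F` fails; by Łoś's theorem,
applied through the standard translation, their ultraproduct along an ultrafilter refining `atTop`
on the finite parts is a model of `T` at which all of `Φ ∪ Ψ` fails. A finite cover `F` then
splits into `F ∩ Φ` and `F ∩ Ψ`, because no point of `𝒦` satisfies a formula of `Ψ` and no point
outside `𝒦` one of `Φ`. -/

open Filter

variable {P R : Type}

def MF.st (x : ℕ) : MF P R → FO P R
  | .top => .top
  | .atom p => .atom p x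
  | .neg φ => .neg (st x φ)
  | .and φ ψ => .and (st x φ) (st x ψ)
  | .dia r φ => .ex (x + 1) (.and (.rel r x (x + 1)) (st (x + 1) φ))

theorem fsat_st {W : Type} (M : KModel P R W) (φ : MF P R) (x : ℕ) (f : ℕ → W) :
    fsat M f (φ.st x) ↔ msat M (f x) φ := by
  induction φ generalizing x f with
  | top => exact Iff.rfl
  | atom p => exact Iff.rfl
  | neg φ ih => exact not_congr (ih x f)
  | and φ ψ ihφ ihψ => exact and_congr (ihφ x f) (ihψ x f)
  | dia r φ ih =>
    refine exists_congr fun v => and_congr ?_ ?_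
    · simp only [fsat, Function.update_self, Function.update_of_ne (Nat.succ_ne_self x).symm]
    · rw [ih, Function.update_self]

def Models {W : Type} (M : KModel P R W) (T : Set (FO P R)) : Prop :=
  ∀ φ ∈ T, ∀ f : ℕ → W, fsat M f φ

section Ultraproduct

variable {I : Type} {W : I → Type} (U : Ultrafilter I) (M : ∀ i, KModel P R (W i))

def ultraproduct : KModel P R ((U : Filter I).Product W) where
  val p := Quotient.lift (fun f => ∀ᶠ i in U, (M i).val p (f i)) fun _ _ h =>
    propext <| eventually_congr <| h.mono fun i hi => by rw [hi]
  rel r := Quotient.lift₂ (fun f g => ∀ᶠ i in U, (M i).rel r (f i) (g i)) fun _ _ _ _ hf hg =>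
    propext <| eventually_congr <| (hf.and hg).mono fun i hi => by rw [hi.1, hi.2]

theorem fsat_ultraproduct [∀ i, Nonempty (W i)] (φ : FO P R) (g : ℕ → ∀ i, W i) :
    fsat (ultraproduct U M) (fun n => (g n : (U : Filter I).Product W)) φ ↔
      ∀ᶠ i in U, fsat (M i) (fun n => g n i) φ := by
  induction φ generalizing g with
  | top => simp only [fsat, eventually_true]
  | eq x y => exact Quotient.eq
  | atom p x => exact Iff.rfl
  | rel r x y => exact Iff.rfl
  | neg φ ih => simp only [fsat, ih, Ultrafilter.eventually_not]
  | and φ ψ ihφ ihψ => simp only [fsat, ihφ, ihψ, eventually_and]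
  | ex x φ ih =>
    have hupd : ∀ h : ∀ i, W i,
        Function.update (β := fun _ => (U : Filter I).Product W) (fun n => g n) x h =
          fun n => (Function.update g x h n : (U : Filter I).Product W) := fun h =>
      (Function.comp_update _ g x h).symm
    have hupd_at : ∀ (h : ∀ i, W i) (i : I),
        (fun n => Function.update g x h n i) = Function.update (fun n => g n i) x (h i) :=
      fun h i => Function.comp_update (fun k : ∀ i, W i => k i) g x h
    simp only [fsat]
    constructor
    · rintro ⟨v, hv⟩
      obtain ⟨h, rfl⟩ : ∃ h : ∀ i, W i, (h : (U : Filter I).Product W) = v := Quotient.exists_rep v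
      rw [hupd h, ih] at hv
      exact hv.mono fun i hi => ⟨h i, by rwa [← hupd_at]⟩
    · intro hex
      let h : ∀ i, W i := fun i =>
        Classical.epsilon fun v => fsat (M i) (Function.update (fun n => g n i) x v) φ
      refine ⟨(h : (U : Filter I).Product W), ?_⟩
      rw [hupd h, ih]
      exact hex.mono fun i hi => by rw [hupd_at]; exact Classical.epsilon_spec hi

theorem msat_ultraproduct (φ : MF P R) (w : ∀ i, W i) :
    msat (ultraproduct U M) (w : (U : Filter I).Product W) φ ↔ ∀ᶠ i in U, msat (M i) (w i) φ := by
  have : ∀ i, Nonempty (W i) := fun i => ⟨w i⟩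
  refine (fsat_st (ultraproduct U M) φ 0 fun _ => w).symm.trans ?_
  simpa only [fsat_st] using fsat_ultraproduct U M (φ.st 0) fun _ => w

theorem models_ultraproduct [∀ i, Nonempty (W i)] {T : Set (FO P R)} (hM : ∀ i, Models (M i) T) :
    Models (ultraproduct U M) T := by
  intro φ hφ f
  obtain ⟨g, rfl⟩ : ∃ g : ℕ → ∀ i, W i, (fun n => (g n : (U : Filter I).Product W)) = f :=
    ⟨fun n => (f n).out, funext fun n => Quotient.out_eq (f n)⟩
  exact (fsat_ultraproduct U M φ g).2 (Eventually.of_forall fun i => hM i φ hφ _)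

end Ultraproduct

theorem exists_finset_forall_models_exists_msat {S : Set (MF P R)} {T : Set (FO P R)}
    (hS : ∀ (W : Type) (M : KModel P R W) (w : W), Models M T → ∃ χ ∈ S, msat M w χ) :
    ∃ F : Finset (MF P R), ↑F ⊆ S ∧
      ∀ (W : Type) (M : KModel P R W) (w : W), Models M T → ∃ χ ∈ F, msat M w χ := by
  by_contra! hno
  have hctr : ∀ F : Finset S, ∃ (W : Type) (M : KModel P R W) (w : W),
      Models M T ∧ ∀ χ ∈ F, ¬ msat M w χ := fun F => by
    obtain ⟨W, M, w, hM, hF⟩ := hno (F.map (Function.Embedding.subtype _)) (by simp)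
    exact ⟨W, M, w, hM, fun χ hχ => hF χ (Finset.mem_map_of_mem _ hχ)⟩
  choose W M w hM hF using hctr
  have : ∀ F, Nonempty (W F) := fun F => ⟨w F⟩
  let U : Ultrafilter (Finset S) := .of atTop
  obtain ⟨χ, hχ, hsat⟩ :=
    hS _ (ultraproduct U M) (w : (U : Filter _).Product W) (models_ultraproduct U M hM)
  have hcontains : ∀ᶠ F in (U : Filter (Finset S)), {⟨χ, hχ⟩} ≤ F :=
    Ultrafilter.of_le atTop (eventually_ge_atTop _)
  have hfails : ∀ᶠ F in U, ¬ msat (M F) (w F) χ :=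
    hcontains.mono fun F hle => hF F ⟨χ, hχ⟩ (Finset.singleton_subset_iff.1 hle)
  exact (((msat_ultraproduct U M χ w).1 hsat).and hfails).exists.elim fun _ h => h.2 h.1

def Defines (H K : ∀ W : Type, KModel P R W → W → Prop) (Φ : Set (MF P R)) : Prop :=
  ∀ (W : Type) (M : KModel P R W) (w : W), H W M w → (K W M w ↔ ∃ φ ∈ Φ, msat M w φ)

theorem Defines.exists_mem_union_msat {H K : ∀ W : Type, KModel P R W → W → Prop}
    {Φ Ψ : Set (MF P R)} (hΦ : Defines H K Φ) (hΨ : Defines H (fun W M w => ¬ K W M w) Ψ)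
    {W : Type} {M : KModel P R W} {w : W} (hH : H W M w) : ∃ χ ∈ Φ ∪ Ψ, msat M w χ := by
  by_cases hK : K W M w
  · obtain ⟨φ, hφ, hsat⟩ := (hΦ W M w hH).1 hK
    exact ⟨φ, .inl hφ, hsat⟩
  · obtain ⟨ψ, hψ, hsat⟩ := (hΨ W M w hH).1 hK
    exact ⟨ψ, .inr hψ, hsat⟩

theorem Defines.inter_of_cover {H K : ∀ W : Type, KModel P R W → W → Prop}
    {Φ Ψ F : Set (MF P R)} (hΦ : Defines H K Φ)
    (hΨ : ∀ (W : Type) (M : KModel P R W) (w : W), H W M w → (∃ ψ ∈ Ψ, msat M w ψ) → ¬ K W M w)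
    (hF : F ⊆ Φ ∪ Ψ)
    (hcover : ∀ (W : Type) (M : KModel P R W) (w : W), H W M w → ∃ χ ∈ F, msat M w χ) :
    Defines H K (F ∩ Φ) := by
  intro W M w hH
  refine ⟨fun hK => ?_, fun ⟨φ, hφ, hsat⟩ => (hΦ W M w hH).2 ⟨φ, hφ.2, hsat⟩⟩
  obtain ⟨χ, hχF, hsat⟩ := hcover W M w hH
  refine ⟨χ, ⟨hχF, (hF hχF).resolve_right fun hχΨ => ?_⟩, hsat⟩
  exact hΨ W M w hH ⟨χ, hχΨ, hsat⟩ hK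

theorem stmt_10_general (P R : Type)
    (H K : ∀ W : Type, KModel P R W → W → Prop)
    (Φ Ψ : Set (MF P R)) (T : Set (FO P R))
    (hΦ : ∀ (W : Type) (M : KModel P R W) (w : W),
        H W M w → (K W M w ↔ ∃ φ ∈ Φ, msat M w φ))
    (hΨ : ∀ (W : Type) (M : KModel P R W) (w : W),
        H W M w → (¬ K W M w ↔ ∃ ψ ∈ Ψ, msat M w ψ))
    (hT : ∀ (W : Type) (M : KModel P R W) (w : W),
        H W M w ↔ ∀ φ ∈ T, ∀ f : ℕ → W, fsat M f φ) :
    ∃ Φ' ⊆ Φ, ∃ Ψ' ⊆ Ψ, Φ'.Finite ∧ Ψ'.Finite ∧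
      (∀ (W : Type) (M : KModel P R W) (w : W),
        H W M w → (K W M w ↔ ∃ φ ∈ Φ', msat M w φ)) ∧
      (∀ (W : Type) (M : KModel P R W) (w : W),
        H W M w → (¬ K W M w ↔ ∃ ψ ∈ Ψ', msat M w ψ)) := by
  obtain ⟨F, hF, hFcover⟩ := exists_finset_forall_models_exists_msat fun W M w hM =>
    Defines.exists_mem_union_msat hΦ hΨ ((hT W M w).2 hM)
  replace hFcover := fun W M w hH => hFcover W M w ((hT W M w).1 hH)
  refine ⟨↑F ∩ Φ, Set.inter_subset_right, ↑F ∩ Ψ, Set.inter_subset_right,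
    F.finite_toSet.inter_of_left _, F.finite_toSet.inter_of_left _, ?_, ?_⟩
  · exact Defines.inter_of_cover hΦ (fun W M w hH hsat => (hΨ W M w hH).2 hsat) hF hFcover
  · exact Defines.inter_of_cover hΨ (fun W M w hH hsat => not_not_intro ((hΦ W M w hH).2 hsat))
      (Set.union_comm Φ Ψ ▸ hF) hFcover

/-- if ⋁Φ defines 𝒦 w.r.t. 𝓗, ⋁Ψ defines 𝓗∖𝒦 w.r.t. 𝓗, and 𝓗 is
defined by a first-order theory T, then finite subsets Φ' ⊆ Φ and Ψ' ⊆ Ψ already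
define 𝒦 and 𝓗∖𝒦 w.r.t. 𝓗. -/
theorem stmt_10 (P R : Type)
    (H K : ∀ W : Type, KModel P R W → W → Prop)
    (hsub : ∀ (W : Type) (M : KModel P R W) (w : W), K W M w → H W M w)
    (Φ Ψ : Set (MF P R)) (T : Set (FO P R))
    (hΦ : ∀ (W : Type) (M : KModel P R W) (w : W),
        H W M w → (K W M w ↔ ∃ φ ∈ Φ, msat M w φ))
    (hΨ : ∀ (W : Type) (M : KModel P R W) (w : W),
        H W M w → (¬ K W M w ↔ ∃ ψ ∈ Ψ, msat M w ψ))
    (hT : ∀ (W : Type) (M : KModel P R W) (w : W),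
        H W M w ↔ ∀ φ ∈ T, ∀ f : ℕ → W, fsat M f φ) :
    ∃ Φ' ⊆ Φ, ∃ Ψ' ⊆ Ψ, Φ'.Finite ∧ Ψ'.Finite ∧
      (∀ (W : Type) (M : KModel P R W) (w : W),
        H W M w → (K W M w ↔ ∃ φ ∈ Φ', msat M w φ)) ∧
      (∀ (W : Type) (M : KModel P R W) (w : W),
        H W M w → (¬ K W M w ↔ ∃ ψ ∈ Ψ', msat M w ψ)) :=
  stmt_10_general P R H K Φ Ψ T hΦ hΨ hT
end

section
/- The Thue–Morse sequence is cube-free: there is no nonempty finite binary word u and finite word t such that tuuu is a prefix of the Thue–Morse sequence. -/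
/-- The Thue–Morse sequence: ω(n) is the parity of the number of 1s in the binary
expansion of n. -/
def thueMorse (n : ℕ) : Bool := (Nat.digits 2 n).count 1 % 2 == 1


lemma tm_even (m : ℕ) : thueMorse (2*m) = thueMorse m := by
  rcases Nat.eq_zero_or_pos m with rfl | hm
  · rfl
  · unfold thueMorse
    rw [Nat.digits_def' (by norm_num : 1 < 2) (by omega)]
    simp [Nat.mul_div_cancel_left _ (by norm_num : 0 < 2), Nat.mul_mod_right]

lemma tm_odd (m : ℕ) : thueMorse (2*m+1) = !thueMorse m := by
  unfold thueMorse
  rw [Nat.digits_def' (by norm_num : 1 < 2) (by omega)]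
  have h1 : (2*m+1) % 2 = 1 := by omega
  have h2 : (2*m+1) / 2 = m := by omega
  rw [h1, h2, List.count_cons_self]
  rcases Nat.mod_two_eq_zero_or_one ((Nat.digits 2 m).count 1) with h | h
  · rw [Nat.add_mod, h]; simp [h]
  · rw [Nat.add_mod, h]; simp [h]

lemma tm_no_three (n : ℕ) :
    ¬ (thueMorse n = thueMorse (n+1) ∧ thueMorse (n+1) = thueMorse (n+2)) := by
  rintro ⟨h1, h2⟩
  rcases Nat.even_or_odd n with ⟨m, rfl⟩ | ⟨m, rfl⟩
  · rw [show m + m = 2*m by ring] at h1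
    rw [tm_even, tm_odd] at h1
    exact (Bool.not_ne_self _).symm h1
  · rw [show 2*m+1+1 = 2*(m+1) by ring, show 2*m+1+2 = 2*(m+1)+1 by ring] at h2
    rw [tm_even, tm_odd] at h2
    exact (Bool.not_ne_self _).symm h2

lemma tm_overlap_free : ∀ p, 1 ≤ p → ∀ a,
    ¬ (∀ i ≤ p, thueMorse (a + i + p) = thueMorse (a + i)) := by
  intro p
  induction p using Nat.strong_induction_on with
  | _ p IH =>
    intro hp a H
    rcases Nat.lt_or_ge p 2 with h2 | h2
    · obtain rfl : p = 1 := by omega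
      refine tm_no_three a ⟨?_, ?_⟩
      · have := H 0 (by omega); simpa using this.symm
      · have := H 1 (by omega)
        rw [show a+1+1 = a+2 by ring] at this; exact this.symm
    · rcases Nat.even_or_odd p with ⟨q, rfl⟩ | ⟨q, rfl⟩
      · -- even period
        rcases Nat.even_or_odd a with ⟨b, rfl⟩ | ⟨b, rfl⟩
        · refine IH q (by omega) (by omega) b (fun i hi => ?_)
          have h := H (2*i) (by omega)
          rw [show b+b+2*i+(q+q) = 2*(b+i+q) by ring,
              show b+b+2*i = 2*(b+i) by ring, tm_even, tm_even] at h
          exact h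
        · refine IH q (by omega) (by omega) b (fun i hi => ?_)
          have h := H (2*i) (by omega)
          rw [show 2*b+1+2*i+(q+q) = 2*(b+i+q)+1 by ring,
              show 2*b+1+2*i = 2*(b+i)+1 by ring, tm_odd, tm_odd] at h
          simpa using h
      · -- odd period 2q+1, here q ≥ 1
        rcases Nat.even_or_odd a with ⟨b, rfl⟩ | ⟨b, rfl⟩
        · have E : ∀ i ≤ q, (!thueMorse (b+i+q)) = thueMorse (b+i) := by
            intro i hi
            have h := H (2*i) (by omega)
            rw [show b+b+2*i+(2*q+1) = 2*(b+i+q)+1 by ring,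
                show b+b+2*i = 2*(b+i) by ring, tm_odd, tm_even] at h
            exact h
          have O : ∀ i ≤ q, thueMorse (b+i+q+1) = !thueMorse (b+i) := by
            intro i hi
            have h := H (2*i+1) (by omega)
            rw [show b+b+(2*i+1)+(2*q+1) = 2*(b+i+q+1) by ring,
                show b+b+(2*i+1) = 2*(b+i)+1 by ring, tm_even, tm_odd] at h
            exact h
          refine tm_no_three (b+q) ⟨?_, ?_⟩
          · have e0 := E 0 (by omega); have o0 := O 0 (by omega)
            simp only [Nat.add_zero] at e0 o0
            rw [o0, ← e0, Bool.not_not]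
          · have e1 := E 1 (by omega); have o1 := O 1 (by omega)
            rw [show b+1+q = b+q+1 by ring] at e1
            rw [show b+1+q+1 = b+q+2 by ring] at o1
            rw [show b+q+1+1 = b+q+2 by ring, o1, ← e1, Bool.not_not]
        · have E : ∀ i ≤ q, thueMorse (b+i+q+1) = !thueMorse (b+i) := by
            intro i hi
            have h := H (2*i) (by omega)
            rw [show 2*b+1+2*i+(2*q+1) = 2*(b+i+q+1) by ring,
                show 2*b+1+2*i = 2*(b+i)+1 by ring, tm_even, tm_odd] at h
            exact h
          have O : ∀ i ≤ q, (!thueMorse (b+i+q+1)) = thueMorse (b+i+1) := by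
            intro i hi
            have h := H (2*i+1) (by omega)
            rw [show 2*b+1+(2*i+1)+(2*q+1) = 2*(b+i+q+1)+1 by ring,
                show 2*b+1+(2*i+1) = 2*(b+i+1) by ring, tm_odd, tm_even] at h
            exact h
          have C : ∀ i ≤ q, thueMorse (b+i) = thueMorse (b+i+1) := by
            intro i hi
            rw [← O i hi, E i hi, Bool.not_not]
          refine tm_no_three b ⟨?_, ?_⟩
          · have := C 0 (by omega); simpa using this
          · have := C 1 (by omega)
            rw [show b+1+1 = b+2 by ring] at this; exact this

/-- the Thue–Morse sequence is cube-free: no word tuuu with u nonempty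
is a prefix of it. -/
theorem stmt_11 (t u : List Bool) (hu : u ≠ []) :
    t ++ u ++ u ++ u ≠ (List.range (t.length + 3 * u.length)).map thueMorse := by
  intro h
  set p := u.length with hup
  set L := t.length with htl
  have hp : 1 ≤ p := List.length_pos_iff.mpr hu
  -- values of the rhs
  have hw : ∀ n, n < L + 3*p →
      ((List.range (L + 3*p)).map thueMorse)[n]? = some (thueMorse n) := by
    intro n hn
    rw [List.getElem?_map, List.getElem?_range hn, Option.map_some]
  -- the triple u++(u++u) is p-periodic in the getElem? sense
  have hv : ∀ j, j < 2*p → (u ++ (u ++ u))[j]? = (u ++ (u ++ u))[j+p]? := by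
    intro j hj
    rcases Nat.lt_or_ge j p with hjp | hjp
    · rw [List.getElem?_append_left hjp,
          List.getElem?_append_right (by omega : u.length ≤ j + p),
          List.getElem?_append_left (by omega : j + p - u.length < u.length)]
      congr 1; omega
    · rw [List.getElem?_append_right (by omega : u.length ≤ j),
          List.getElem?_append_right (by omega : u.length ≤ j + p),
          show j + p - u.length = j by omega,
          List.getElem?_append_left (by omega : j - u.length < u.length),
          List.getElem?_append_right (by omega : u.length ≤ j)]
  have hs : ∀ j, j < 2*p → (t ++ u ++ u ++ u)[L+j]? = (t ++ u ++ u ++ u)[L+j+p]? := by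
    intro j hj
    rw [List.append_assoc, List.append_assoc,
        List.getElem?_append_right (by omega : t.length ≤ L + j),
        List.getElem?_append_right (by omega : t.length ≤ L + j + p)]
    have e1 : L + j - t.length = j := by omega
    have e2 : L + j + p - t.length = j + p := by omega
    rw [e1, e2]
    exact hv j hj
  refine tm_overlap_free p hp L (fun i hi => ?_)
  have h1 := hs i (by omega)
  rw [h, hw (L+i) (by omega), hw (L+i+p) (by omega)] at h1
  exact (Option.some_inj.mp h1).symm
end

section
/- If two pointed (Π,ℛ)-models have identical neighbourhoods of radius n around their distinguished points (i.e., are isomorphic as pointed structures restricted to distance ≤ n), then every (Π,ℛ)-automaton whose effective running time is at most n gives the same accept/reject verdict on both. -/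
/-- `distLE M n u v`: v is within graph distance n of u, where steps may traverse
any relation of the model in either direction. -/
def distLE {P R W : Type} (M : KModel P R W) : ℕ → W → W → Prop
  | 0, u, v => u = v
  | n + 1, u, v => u = v ∨ ∃ x, (∃ r, M.rel r u x ∨ M.rel r x u) ∧ distLE M n x v

theorem distLE_self {P R W : Type} (M : KModel P R W) (n : ℕ) (w : W) : distLE M n w w := by
  cases n with
  | zero => rfl
  | succ n => exact Or.inl rfl


theorem distLE_mono' {P R W : Type} (M : KModel P R W) :
    ∀ {k k' : ℕ}, k ≤ k' → ∀ {a b : W}, distLE M k a b → distLE M k' a b := by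
  intro k
  induction k with
  | zero =>
    intro k' _ a b h
    have h' : a = b := h
    subst h'
    exact distLE_self M k' a
  | succ k ih =>
    intro k' hk a b h
    obtain ⟨k'', rfl⟩ : ∃ k'', k' = k'' + 1 := ⟨k' - 1, by omega⟩
    rcases (h : a = b ∨ ∃ x, (∃ r, M.rel r a x ∨ M.rel r x a) ∧ distLE M k x b)
        with rfl | ⟨x, hx, hd⟩
    · exact distLE_self M _ a
    · exact Or.inr ⟨x, hx, ih (by omega) hd⟩

theorem distLE_step {P R W : Type} (M : KModel P R W) :
    ∀ {k : ℕ} {a b c : W}, distLE M k a b → (∃ r, M.rel r b c ∨ M.rel r c b) →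
      distLE M (k+1) a c := by
  intro k
  induction k with
  | zero =>
    intro a b c h e
    have h' : a = b := h
    subst h'
    exact Or.inr ⟨c, e, rfl⟩
  | succ k ih =>
    intro a b c h e
    rcases (h : a = b ∨ ∃ x, (∃ r, M.rel r a x ∨ M.rel r x a) ∧ distLE M k x b)
        with rfl | ⟨x, hx, hd⟩
    · exact Or.inr ⟨c, e, distLE_self M _ c⟩
    · exact Or.inr ⟨x, hx, ih hd e⟩

theorem distLE_unsnoc {P R W : Type} (M : KModel P R W) :
    ∀ {k : ℕ} {a b : W}, distLE M (k+1) a b →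
      a = b ∨ ∃ x, distLE M k a x ∧ ∃ r, M.rel r x b ∨ M.rel r b x := by
  intro k
  induction k with
  | zero =>
    intro a b h
    rcases (h : a = b ∨ ∃ x, (∃ r, M.rel r a x ∨ M.rel r x a) ∧ distLE M 0 x b)
        with rfl | ⟨x, e, hx⟩
    · exact Or.inl rfl
    · have hx' : x = b := hx
      subst hx'
      exact Or.inr ⟨a, rfl, e⟩
  | succ k ih =>
    intro a b h
    rcases (h : a = b ∨ ∃ x, (∃ r, M.rel r a x ∨ M.rel r x a) ∧ distLE M (k+1) x b)
        with rfl | ⟨x, e, hd⟩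
    · exact Or.inl rfl
    · rcases ih hd with rfl | ⟨y, hy, ey⟩
      · exact Or.inr ⟨a, distLE_self M _ a, e⟩
      · exact Or.inr ⟨y, Or.inr ⟨x, e, hy⟩, ey⟩


/-- if the radius-n balls around the distinguished points of two
pointed models are isomorphic (as pointed structures), then every automaton with
effective running time at most n gives the same accept/reject verdict on both. -/
theorem stmt_17 (P R : Type) (W W' : Type) (M : KModel P R W) (N : KModel P R W')
    (w : W) (v : W') (n : ℕ)
    (g : {u // distLE M n w u} ≃ {u // distLE N n v u})
    (hpt : (g ⟨w, distLE_self M n w⟩).1 = v)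
    (hval : ∀ (u : {u // distLE M n w u}) (p : P), M.val p u.1 ↔ N.val p (g u).1)
    (hrel : ∀ (u u' : {u // distLE M n w u}) (r : R),
        M.rel r u.1 u'.1 ↔ N.rel r (g u).1 (g u').1)
    (Q Msg : Type) (A : MPA P R Q Msg)
    (htime : ∀ (V : Type) (K : KModel P R V) (u : V),
        ∃ m ≤ n, A.acceptsAt K u m ∨ A.rejectsAt K u m) :
    (A.accepts M w ↔ A.accepts N v) ∧ (A.rejects M w ↔ A.rejects N v) := by
  have gdist : ∀ k, k ≤ n → ∀ (u : {u // distLE M n w u}), distLE M k w u.1 →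
      distLE N k v (g u).1 := by
    intro k
    induction k with
    | zero =>
      intro _ u hu
      have h' : w = u.1 := hu
      have hu' : u = ⟨w, distLE_self M n w⟩ := Subtype.ext h'.symm
      rw [hu']
      exact hpt.symm
    | succ k ih =>
      intro hk u hu
      rcases distLE_unsnoc M hu with h' | ⟨x, hx, ex⟩
      · have hu' : u = ⟨w, distLE_self M n w⟩ := Subtype.ext h'.symm
        rw [hu']
        exact distLE_mono' N (Nat.zero_le _) (hpt.symm : distLE N 0 v _)
      · have hxn : distLE M n w x := distLE_mono' M (by omega) hx
        have hgx := ih (by omega) ⟨x, hxn⟩ hx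
        have he : ∃ r, N.rel r (g ⟨x, hxn⟩).1 (g u).1 ∨ N.rel r (g u).1 (g ⟨x, hxn⟩).1 := by
          obtain ⟨r, hr | hr⟩ := ex
          · exact ⟨r, Or.inl ((hrel ⟨x, hxn⟩ u r).mp hr)⟩
          · exact ⟨r, Or.inr ((hrel u ⟨x, hxn⟩ r).mp hr)⟩
        exact distLE_step N hgx he
  have runEq : ∀ m k, m + k ≤ n → ∀ (u : {u // distLE M n w u}), distLE M k w u.1 →
      A.run M m u.1 = A.run N m (g u).1 := by
    intro m
    induction m with
    | zero =>
      intro k hk u hu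
      simp only [MPA.run]
      exact congrArg A.init (Set.ext fun p => hval u p)
    | succ m ih =>
      intro k hk u hu
      simp only [MPA.run]
      rw [ih k (by omega) u hu]
      congr 1
      funext r
      ext msg
      constructor
      · rintro ⟨x, hx, rfl⟩
        have hxd : distLE M (k+1) w x := distLE_step M hu ⟨r, Or.inl hx⟩
        have hxn : distLE M n w x := distLE_mono' M (by omega) hxd
        refine ⟨(g ⟨x, hxn⟩).1, (hrel u ⟨x, hxn⟩ r).mp hx, ?_⟩
        rw [ih (k+1) (by omega) ⟨x, hxn⟩ hxd]
      · rintro ⟨x', hx', rfl⟩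
        have hgd : distLE N k v (g u).1 := gdist k (by omega) u hu
        have hx'd : distLE N (k+1) v x' := distLE_step N hgd ⟨r, Or.inl hx'⟩
        have hx'n : distLE N n v x' := distLE_mono' N (by omega) hx'd
        have hgy : g (g.symm ⟨x', hx'n⟩) = ⟨x', hx'n⟩ := g.apply_symm_apply _
        have hry : M.rel r u.1 (g.symm ⟨x', hx'n⟩).1 :=
          (hrel u (g.symm ⟨x', hx'n⟩) r).mpr (by rw [hgy]; exact hx')
        have hyd : distLE M (k+1) w (g.symm ⟨x', hx'n⟩).1 :=
          distLE_step M hu ⟨r, Or.inl hry⟩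
        refine ⟨(g.symm ⟨x', hx'n⟩).1, hry, ?_⟩
        rw [ih (k+1) (by omega) (g.symm ⟨x', hx'n⟩) hyd, hgy]
  have key : ∀ m ≤ n, A.run M m w = A.run N m v := by
    intro m hm
    have h := runEq m 0 (by omega) ⟨w, distLE_self M n w⟩ rfl
    rwa [hpt] at h
  have haccIff : ∀ m ≤ n, (A.acceptsAt M w m ↔ A.acceptsAt N v m) := by
    intro m hm
    unfold MPA.acceptsAt
    rw [key m hm]
    constructor
    · rintro ⟨h1, h2⟩
      refine ⟨h1, fun j hj => ?_⟩
      rw [← key j (by omega)]; exact h2 j hj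
    · rintro ⟨h1, h2⟩
      refine ⟨h1, fun j hj => ?_⟩
      rw [key j (by omega)]; exact h2 j hj
  have hrejIff : ∀ m ≤ n, (A.rejectsAt M w m ↔ A.rejectsAt N v m) := by
    intro m hm
    unfold MPA.rejectsAt
    rw [key m hm]
    constructor
    · rintro ⟨h1, h2⟩
      refine ⟨h1, fun j hj => ?_⟩
      rw [← key j (by omega)]; exact h2 j hj
    · rintro ⟨h1, h2⟩
      refine ⟨h1, fun j hj => ?_⟩
      rw [key j (by omega)]; exact h2 j hj
  have boundAcc : ∀ (V : Type) (K : KModel P R V) (u : V), A.accepts K u →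
      ∃ m ≤ n, A.acceptsAt K u m := by
    intro V K u h
    obtain ⟨t, ht⟩ := h
    obtain ⟨m, hmn, hc | hc⟩ := htime V K u
    · exact ⟨m, hmn, hc⟩
    · rcases lt_trichotomy t m with h | rfl | h
      · exact absurd ht.1 (hc.2 t h)
      · exact ⟨t, hmn, ht⟩
      · exact absurd hc.1 (ht.2 m h)
  have boundRej : ∀ (V : Type) (K : KModel P R V) (u : V), A.rejects K u →
      ∃ m ≤ n, A.rejectsAt K u m := by
    intro V K u h
    obtain ⟨t, ht⟩ := h
    obtain ⟨m, hmn, hc | hc⟩ := htime V K u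
    · rcases lt_trichotomy t m with h | rfl | h
      · exact absurd ht.1 (hc.2 t h)
      · exact ⟨t, hmn, ht⟩
      · exact absurd hc.1 (ht.2 m h)
    · exact ⟨m, hmn, hc⟩
  constructor
  · constructor
    · intro h
      obtain ⟨m, hm, hacc⟩ := boundAcc W M w h
      exact ⟨m, (haccIff m hm).mp hacc⟩
    · intro h
      obtain ⟨m, hm, hacc⟩ := boundAcc W' N v h
      exact ⟨m, (haccIff m hm).mpr hacc⟩
  · constructor
    · intro h
      obtain ⟨m, hm, hrej⟩ := boundRej W M w h
      exact ⟨m, (hrejIff m hm).mp hrej⟩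
    · intro h
      obtain ⟨m, hm, hrej⟩ := boundRej W' N v h
      exact ⟨m, (hrejIff m hm).mpr hrej⟩
end
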